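/- Let F : ℝⁿ → ℝ be convex and differentiable with nonempty minimizer set X* and minimal value F*, and let φ : ℝⁿ → ℝ be differentiable, strictly convex along coordinates, with ∇φ block coordinate-wise Lipschitz with constants Hᵢ > 0; assume F is relative smooth along coordinates with respect to φ with constants Lᵢ > 0. Fix α ∈ ℝ, S_α = ∑_j L_j^α, pᵢ = Lᵢ^α/S_α, H_max = max_i Hᵢ. Let d : ℝⁿ × {1,…,N} → ∪ᵢℝ^{nᵢ} be a selection with d(x,i) a minimizer of the subproblem d ↦ ⟨Uᵢᵀ∇F(x), d⟩ + Lᵢ D_φ(x + Uᵢd, x). Fix x₀ with Δ₀ := F(x₀) − F* > 0 and, for ω ∈ {1,…,N}^k, define iterates x₀(ω) = x₀ and x_{j+1}(ω) = x_j(ω) + U_{ω_j} d(x_j(ω), ω_j). Suppose there is R > 0 such that for every k and index word ω there is x* ∈ X* with ‖x_k(ω) − x*‖_{1−α} ≤ R, where ‖y‖²_{1−α} := ∑ᵢ Lᵢ^{1−α}‖Uᵢᵀy‖². Then for every k ≥ 1: ∑_{ω∈{1,…,N}^k} (∏_{j<k} p_{ω_j}) F(x_k(ω)) − F* ≤ 2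 S_α H_max R² / ( k + 2 S_α H_max R² / Δ₀ ). -/

import Mathlib

/-! Compare the block step `d(x, i)` with the block component `(t / pᵢ) Uᵢ Uᵢᵀ (x* − x)` of the
direction to a minimizer. Averaging over `i` with the weights `pᵢ`, the first-order convexity
inequality for `F` and the descent lemma for `φ` give the expected one-step decrease
`E[Δ₊] ≤ Δ − Δ² / C`, `C = 2 S_α H_max R²`. Jensen's inequality carries it over to
`δₖ = E[F(xₖ)] − F*`, and a nonnegative sequence with `δₖ₊₁ ≤ δₖ − δₖ² / C` satisfies
`δₖ ≤ C / (k + C / δ₀)`. -/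

noncomputable section
open scoped RealInnerProductSpace

/-- `blockProj b i x` models `Uᵢ Uᵢᵀ x`: the vector of `ℝⁿ` keeping the coordinates of block
`i` (as given by the block assignment `b : Fin n → Fin N`) and zeroing the others.
A vector `d` of the block subspace (i.e. `Uᵢ d`) is modeled as a vector with
`blockProj b i d = d`; then `⟨Uᵢᵀ y, d⟩ = ⟪y, d⟫` and `‖Uᵢᵀ y‖ = ‖blockProj b i y‖`. -/
def blockProj {n N : ℕ} (b : Fin n → Fin N) (i : Fin N) (x : EuclideanSpace ℝ (Fin n)) :
    EuclideanSpace ℝ (Fin n) :=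
  (EuclideanSpace.equiv (Fin n) ℝ).symm (fun j => if b j = i then x j else 0)

/-- Deterministic trajectory of a coordinate method: `traj step x₀ k ω` is the iterate
`x_k(ω)` obtained from `x₀` by applying `step ω₀, step ω₁, …, step ω_{k−1}` in order. -/
def traj {n N : ℕ} (step : Fin N → EuclideanSpace ℝ (Fin n) → EuclideanSpace ℝ (Fin n))
    (x₀ : EuclideanSpace ℝ (Fin n)) : ∀ k : ℕ, (Fin k → Fin N) → EuclideanSpace ℝ (Fin n)
  | 0, _ => x₀
  | (k + 1), ω => step (ω (Fin.last k)) (traj step x₀ k (fun j => ω j.castSucc))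

open Finset

section InnerProductSpace

variable {E : Type*} [NormedAddCommGroup E] [InnerProductSpace ℝ E] [CompleteSpace E]

/-- The Bregman distance `D_φ(x + h, x)`. -/
def bregmanDist (φ : E → ℝ) (x h : E) : ℝ := φ (x + h) - φ x - ⟪gradient φ x, h⟫

lemma hasDerivAt_apply_add_smul {f : E → ℝ} {x h : E} {t : ℝ}
    (hf : DifferentiableAt ℝ f (x + t • h)) :
    HasDerivAt (fun s : ℝ => f (x + s • h)) ⟪gradient f (x + t • h), h⟫ t := by
  have hline : HasDerivAt (fun s : ℝ => x + s • h) h t := by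
    simpa using ((hasDerivAt_id t).smul_const h).const_add x
  simpa [Function.comp_def] using hf.hasGradientAt.hasFDerivAt.comp_hasDerivAt t hline

lemma ConvexOn.inner_gradient_sub_le {f : E → ℝ} (hf : ConvexOn ℝ Set.univ f) {x : E}
    (hfx : DifferentiableAt ℝ f x) (y : E) : ⟪gradient f x, y - x⟫ ≤ f y - f x := by
  have hline : ConvexOn ℝ Set.univ (fun t : ℝ => f (x + t • (y - x))) := by
    simpa [Function.comp_def, AffineMap.lineMap_apply_module', add_comm x] using
      hf.comp_affineMap (AffineMap.lineMap x y)
  have := hline.le_slope_of_hasDerivAt (Set.mem_univ 0) (Set.mem_univ 1) one_pos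
    (hasDerivAt_apply_add_smul (by simpa using hfx))
  simpa [slope_def_field] using this

lemma bregmanDist_le_of_inner_gradient_sub_le {φ : E → ℝ} (hφ : Differentiable ℝ φ) {x h : E}
    {K : ℝ} (hK : ∀ t ∈ Set.Ioo (0 : ℝ) 1, ⟪gradient φ (x + t • h) - gradient φ x, h⟫ ≤ K * t) :
    bregmanDist φ x h ≤ K / 2 := by
  set ψ : ℝ → ℝ := fun t => φ (x + t • h) - t * ⟪gradient φ x, h⟫ - K / 2 * t ^ 2
  have hψ : ∀ t, HasDerivAt ψ (⟪gradient φ (x + t • h) - gradient φ x, h⟫ - K * t) t := by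
    intro t
    have := ((hasDerivAt_apply_add_smul (x := x) (h := h) (hφ _)).sub
      ((hasDerivAt_id t).mul_const ⟪gradient φ x, h⟫)).sub
      ((hasDerivAt_pow 2 t).const_mul (K / 2))
    refine this.congr_deriv ?_
    rw [inner_sub_left]
    norm_num
    ring
  have hanti : AntitoneOn ψ (Set.Icc 0 1) := by
    refine antitoneOn_of_hasDerivWithinAt_nonpos (convex_Icc 0 1)
      (fun t _ => (hψ t).continuousAt.continuousWithinAt)
      (fun t _ => (hψ t).hasDerivWithinAt) fun t ht => ?_
    rw [interior_Icc] at ht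
    linarith [hK t ht]
  have := hanti (Set.left_mem_Icc.2 zero_le_one) (Set.right_mem_Icc.2 zero_le_one) zero_le_one
  simp only [ψ, bregmanDist, zero_smul, one_smul, add_zero] at this ⊢
  linarith

end InnerProductSpace

lemma sq_sum_mul_le_sum_mul_sq {ι : Type*} [Fintype ι] (w Δ : ι → ℝ) (hw : ∀ i, 0 ≤ w i)
    (hw1 : ∑ i, w i = 1) : (∑ i, w i * Δ i) ^ 2 ≤ ∑ i, w i * Δ i ^ 2 := by
  simpa using (even_two.convexOn_pow (𝕜 := ℝ)).map_sum_le (fun i _ => hw i) hw1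
    (fun i _ => Set.mem_univ (Δ i))

lemma sub_sq_div_le_div_add_one {C s m : ℝ} (hC : 0 < C) (hm : 0 < m)
    (hsC : s ≤ C) (hsm : s * m ≤ C) : s - s ^ 2 / C ≤ C / (m + 1) := by
  rw [sub_div' hC.ne', div_le_div_iff₀ hC (by linarith)]
  nlinarith [mul_nonneg (sub_nonneg.2 hsm) (sub_nonneg.2 hsC), sq_nonneg s]

lemma le_div_nat_add_of_succ_le_sub_sq_div {δ : ℕ → ℝ} {C : ℝ} (hC : 0 < C) (hδ₀ : 0 < δ 0)
    (hδ : ∀ k, 0 ≤ δ k) (hrec : ∀ k, δ (k + 1) ≤ δ k - δ k ^ 2 / C) (k : ℕ) :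
    δ k ≤ C / (k + C / δ 0) := by
  induction k with
  | zero => rw [Nat.cast_zero, zero_add, div_div_cancel₀ hC.ne']
  | succ k ih =>
    have hm : 0 < (k : ℝ) + C / δ 0 := by positivity
    have hδC : δ k ≤ C := by
      have h := (hδ (k + 1)).trans (hrec k)
      rw [sub_nonneg, div_le_iff₀ hC, sq] at h
      nlinarith [hδ k]
    calc δ (k + 1) ≤ δ k - δ k ^ 2 / C := hrec k
      _ ≤ C / ((k + C / δ 0) + 1) :=
        sub_sq_div_le_div_add_one hC hm hδC ((le_div_iff₀ hm).1 ih)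
      _ = C / ((k + 1 : ℕ) + C / δ 0) := by push_cast; ring

lemma sum_prod_eq_one {ι : Type*} [Fintype ι] {p : ι → ℝ} (hp : ∑ i, p i = 1) (k : ℕ) :
    ∑ ω : Fin k → ι, ∏ j, p (ω j) = 1 := by
  rw [← Fintype.sum_pow, hp, one_pow]

lemma sum_prod_mul_succ {ι R : Type*} [Fintype ι] [CommSemiring R] (p : ι → R) {k : ℕ}
    (g : (Fin (k + 1) → ι) → R) :
    ∑ ω : Fin (k + 1) → ι, (∏ j, p (ω j)) * g ω
      = ∑ σ : Fin k → ι, (∏ j, p (σ j)) * ∑ i, p i * g (Fin.snoc σ i) := by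
  rw [← (Fin.snocEquiv fun _ => ι).sum_comp, Fintype.sum_prod_type_right]
  refine sum_congr rfl fun σ _ => ?_
  rw [mul_sum]
  refine sum_congr rfl fun i _ => ?_
  simp only [Fin.snocEquiv_apply, Fin.prod_univ_castSucc, Fin.snoc_castSucc, Fin.snoc_last,
    mul_assoc]
  rfl

section Blocks

variable {n N : ℕ} (b : Fin n → Fin N)

lemma blockProj_apply (i : Fin N) (x : EuclideanSpace ℝ (Fin n)) (j : Fin n) :
    blockProj b i x j = if b j = i then x j else 0 := rfl

lemma blockProj_smul (i : Fin N) (c : ℝ) (x : EuclideanSpace ℝ (Fin n)) :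
    blockProj b i (c • x) = c • blockProj b i x := by
  ext j
  simp [blockProj_apply]

lemma blockProj_neg (i : Fin N) (x : EuclideanSpace ℝ (Fin n)) :
    blockProj b i (-x) = -blockProj b i x := by
  ext j
  simp only [blockProj_apply, PiLp.neg_apply]
  split_ifs <;> simp

lemma blockProj_blockProj (i : Fin N) (x : EuclideanSpace ℝ (Fin n)) :
    blockProj b i (blockProj b i x) = blockProj b i x := by
  ext j
  simp only [blockProj_apply]
  split_ifs <;> rfl

lemma sum_blockProj (x : EuclideanSpace ℝ (Fin n)) : ∑ i, blockProj b i x = x := by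
  ext j
  simp [blockProj_apply]

lemma inner_blockProj_left (i : Fin N) (x y : EuclideanSpace ℝ (Fin n)) :
    ⟪blockProj b i x, y⟫ = ⟪x, blockProj b i y⟫ := by
  simp only [PiLp.inner_apply, blockProj_apply]
  refine sum_congr rfl fun j _ => ?_
  split_ifs <;> simp

variable {b}

lemma bregmanDist_le_of_blockLipschitz {φ : EuclideanSpace ℝ (Fin n) → ℝ}
    (hφ : Differentiable ℝ φ) {i : Fin N} {Hi : ℝ}
    (hlip : ∀ x h, blockProj b i h = h →
      ‖blockProj b i (gradient φ (x + h) - gradient φ x)‖ ≤ Hi * ‖h‖)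
    (x : EuclideanSpace ℝ (Fin n)) {h : EuclideanSpace ℝ (Fin n)} (hh : blockProj b i h = h) :
    bregmanDist φ x h ≤ Hi / 2 * ‖h‖ ^ 2 := by
  have := bregmanDist_le_of_inner_gradient_sub_le hφ (x := x) (h := h) (K := Hi * ‖h‖ ^ 2)
    fun t ht => by
      have hth : blockProj b i (t • h) = t • h := by rw [blockProj_smul, hh]
      calc ⟪gradient φ (x + t • h) - gradient φ x, h⟫
          = ⟪blockProj b i (gradient φ (x + t • h) - gradient φ x), h⟫ := by
            rw [inner_blockProj_left, hh]
        _ ≤ ‖blockProj b i (gradient φ (x + t • h) - gradient φ x)‖ * ‖h‖ :=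
            real_inner_le_norm _ _
        _ ≤ Hi * ‖t • h‖ * ‖h‖ := by gcongr; exact hlip x _ hth
        _ = Hi * ‖h‖ ^ 2 * t := by
            rw [norm_smul, Real.norm_of_nonneg ht.1.le]; ring
  linarith

lemma apply_add_le_of_le_bregman_subproblem {F φ : EuclideanSpace ℝ (Fin n) → ℝ}
    (hφ : Differentiable ℝ φ) {i : Fin N} {Li Hi : ℝ} (hLi : 0 ≤ Li)
    (hlip : ∀ x h, blockProj b i h = h →
      ‖blockProj b i (gradient φ (x + h) - gradient φ x)‖ ≤ Hi * ‖h‖)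
    {x y e : EuclideanSpace ℝ (Fin n)}
    (hrel : F (x + y) ≤ F x + ⟪gradient F x, y⟫ + Li * bregmanDist φ x y)
    (hmin : ⟪gradient F x, y⟫ + Li * bregmanDist φ x y
      ≤ ⟪gradient F x, e⟫ + Li * bregmanDist φ x e) (he : blockProj b i e = e) :
    F (x + y) ≤ F x + ⟪gradient F x, e⟫ + Li * Hi / 2 * ‖e‖ ^ 2 := by
  have hD := mul_le_mul_of_nonneg_left (bregmanDist_le_of_blockLipschitz hφ hlip x he) hLi
  linarith

end Blocks

section Descent

variable {n N : ℕ} {b : Fin n → Fin N} {F : EuclideanSpace ℝ (Fin n) → ℝ} {L H p : Fin N → ℝ}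
  {d : EuclideanSpace ℝ (Fin n) → Fin N → EuclideanSpace ℝ (Fin n)} {x : EuclideanSpace ℝ (Fin n)}

/-- Averaging the block steps `e i = (t / p i) • Uᵢ Uᵢᵀ v` recovers the full direction `t • v`. -/
lemma sum_mul_apply_add_le (hp : ∀ i, 0 < p i) (hp1 : ∑ i, p i = 1)
    (hstep : ∀ i e, blockProj b i e = e →
      F (x + d x i) ≤ F x + ⟪gradient F x, e⟫ + L i * H i / 2 * ‖e‖ ^ 2)
    (t : ℝ) (v : EuclideanSpace ℝ (Fin n)) :
    ∑ i, p i * F (x + d x i)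
      ≤ F x + t * ⟪gradient F x, v⟫ + t ^ 2 / 2 * ∑ i, H i * L i / p i * ‖blockProj b i v‖ ^ 2 := by
  have hterm : ∀ i, p i * F (x + d x i) ≤ p i * F x + t * ⟪gradient F x, blockProj b i v⟫
      + t ^ 2 / 2 * (H i * L i / p i * ‖blockProj b i v‖ ^ 2) := by
    intro i
    have hpi := (hp i).ne'
    have := hstep i ((t / p i) • blockProj b i v) (by rw [blockProj_smul, blockProj_blockProj])
    rw [real_inner_smul_right, norm_smul, mul_pow, Real.norm_eq_abs, sq_abs] at this
    calc p i * F (x + d x i)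
        ≤ p i * (F x + t / p i * ⟪gradient F x, blockProj b i v⟫
          + L i * H i / 2 * ((t / p i) ^ 2 * ‖blockProj b i v‖ ^ 2)) := by gcongr; exact (hp i).le
      _ = _ := by field_simp
  calc ∑ i, p i * F (x + d x i) ≤ ∑ i, (p i * F x + t * ⟪gradient F x, blockProj b i v⟫
        + t ^ 2 / 2 * (H i * L i / p i * ‖blockProj b i v‖ ^ 2)) := sum_le_sum fun i _ => hterm i
    _ = _ := by
      rw [sum_add_distrib, sum_add_distrib, ← sum_mul, hp1, one_mul, ← mul_sum, ← inner_sum,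
        sum_blockProj, ← mul_sum]

/-- The step length `t = Δ / M` balances the linear decrease against the quadratic term. -/
lemma sum_mul_sub_le_sub_sq_div (hp : ∀ i, 0 < p i) (hp1 : ∑ i, p i = 1)
    (hstep : ∀ i e, blockProj b i e = e →
      F (x + d x i) ≤ F x + ⟪gradient F x, e⟫ + L i * H i / 2 * ‖e‖ ^ 2)
    (hF : ConvexOn ℝ Set.univ F) (hFx : DifferentiableAt ℝ F x)
    {xs : EuclideanSpace ℝ (Fin n)} (hxs : F xs ≤ F x) {M : ℝ} (hM : 0 < M)
    (hdist : ∑ i, H i * L i / p i * ‖blockProj b i (x - xs)‖ ^ 2 ≤ M) :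
    ∑ i, p i * (F (x + d x i) - F xs) ≤ (F x - F xs) - (F x - F xs) ^ 2 / (2 * M) := by
  set Δ := F x - F xs
  have hΔ : 0 ≤ Δ := sub_nonneg.2 hxs
  have hinner : ⟪gradient F x, xs - x⟫ ≤ -Δ := by
    linarith [hF.inner_gradient_sub_le hFx xs]
  have hdist' : ∑ i, H i * L i / p i * ‖blockProj b i (xs - x)‖ ^ 2 ≤ M := by
    simpa only [← neg_sub x xs, blockProj_neg, norm_neg] using hdist
  have hsum := sum_mul_apply_add_le hp hp1 hstep (Δ / M) (xs - x)
  calc ∑ i, p i * (F (x + d x i) - F xs) = ∑ i, p i * F (x + d x i) - F xs := by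
        simp only [mul_sub, sum_sub_distrib, ← sum_mul, hp1, one_mul]
    _ ≤ F x + Δ / M * (-Δ) + (Δ / M) ^ 2 / 2 * M - F xs := by
        have ht : 0 ≤ Δ / M := div_nonneg hΔ hM.le
        grw [hsum, hinner, hdist']
    _ = Δ - Δ ^ 2 / (2 * M) := by field_simp; ring

end Descent

section Trajectory

variable {n N : ℕ} {step : Fin N → EuclideanSpace ℝ (Fin n) → EuclideanSpace ℝ (Fin n)}
  {x₀ : EuclideanSpace ℝ (Fin n)}

lemma traj_succ_snoc (k : ℕ) (σ : Fin k → Fin N) (i : Fin N) :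
    traj step x₀ (k + 1) (Fin.snoc σ i) = step i (traj step x₀ k σ) := by
  simp [traj]

/-- Jensen's inequality `(E V)² ≤ E V²` lets the one-step recursion pass to expectations. -/
lemma sum_prod_mul_traj_succ_le {p : Fin N → ℝ} {V : EuclideanSpace ℝ (Fin n) → ℝ} {C : ℝ}
    (hC : 0 ≤ C) (hp : ∀ i, 0 ≤ p i) (hp1 : ∑ i, p i = 1)
    (hstep : ∀ k ω, ∑ i, p i * V (step i (traj step x₀ k ω))
      ≤ V (traj step x₀ k ω) - V (traj step x₀ k ω) ^ 2 / C) (k : ℕ) :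
    ∑ ω : Fin (k + 1) → Fin N, (∏ j, p (ω j)) * V (traj step x₀ (k + 1) ω)
      ≤ ∑ ω : Fin k → Fin N, (∏ j, p (ω j)) * V (traj step x₀ k ω)
        - (∑ ω : Fin k → Fin N, (∏ j, p (ω j)) * V (traj step x₀ k ω)) ^ 2 / C := by
  have hw : ∀ ω : Fin k → Fin N, 0 ≤ ∏ j, p (ω j) := fun ω => prod_nonneg fun j _ => hp _
  rw [sum_prod_mul_succ]
  simp only [traj_succ_snoc]
  calc _ ≤ ∑ ω : Fin k → Fin N, (∏ j, p (ω j))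
          * (V (traj step x₀ k ω) - V (traj step x₀ k ω) ^ 2 / C) :=
        sum_le_sum fun ω _ => mul_le_mul_of_nonneg_left (hstep k ω) (hw ω)
    _ = ∑ ω : Fin k → Fin N, (∏ j, p (ω j)) * V (traj step x₀ k ω)
          - (∑ ω : Fin k → Fin N, (∏ j, p (ω j)) * V (traj step x₀ k ω) ^ 2) / C := by
        simp only [mul_sub, sum_sub_distrib, sum_div, mul_div_assoc]
    _ ≤ _ := by
        gcongr
        exact sq_sum_mul_le_sum_mul_sq _ _ hw (sum_prod_eq_one hp1 k)

lemma sum_prod_mul_traj_le_div {p : Fin N → ℝ} {V : EuclideanSpace ℝ (Fin n) → ℝ} {C : ℝ}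
    (hC : 0 < C) (hp : ∀ i, 0 ≤ p i) (hp1 : ∑ i, p i = 1) (hV : ∀ y, 0 ≤ V y) (hV₀ : 0 < V x₀)
    (hstep : ∀ k ω, ∑ i, p i * V (step i (traj step x₀ k ω))
      ≤ V (traj step x₀ k ω) - V (traj step x₀ k ω) ^ 2 / C) (k : ℕ) :
    ∑ ω : Fin k → Fin N, (∏ j, p (ω j)) * V (traj step x₀ k ω) ≤ C / (k + C / V x₀) := by
  have hδ₀ : ∑ ω : Fin 0 → Fin N, (∏ j, p (ω j)) * V (traj step x₀ 0 ω) = V x₀ := by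
    simp [traj]
  rw [← hδ₀]
  exact le_div_nat_add_of_succ_le_sub_sq_div
    (δ := fun k => ∑ ω : Fin k → Fin N, (∏ j, p (ω j)) * V (traj step x₀ k ω)) hC (by rwa [hδ₀])
    (fun k => sum_nonneg fun ω _ => mul_nonneg (prod_nonneg fun j _ => hp _) (hV _))
    (sum_prod_mul_traj_succ_le hC.le hp hp1 hstep) k

end Trajectory

lemma sum_mul_div_rpow_div_le {N : ℕ} {L H c : Fin N → ℝ} {α S Hmax : ℝ} (hL : ∀ i, 0 < L i)
    (hH : ∀ i, H i ≤ Hmax) (hS : 0 < S) (hc : ∀ i, 0 ≤ c i) :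
    ∑ i, H i * L i / (L i ^ α / S) * c i ≤ S * Hmax * ∑ i, L i ^ (1 - α) * c i := by
  rw [mul_sum]
  refine sum_le_sum fun i _ => ?_
  have hLα := Real.rpow_pos_of_pos (hL i) α
  rw [Real.rpow_sub (hL i), Real.rpow_one]
  calc H i * L i / (L i ^ α / S) * c i = H i * (S * (L i / L i ^ α * c i)) := by field_simp
    _ ≤ Hmax * (S * (L i / L i ^ α * c i)) := mul_le_mul_of_nonneg_right (hH i)
        (mul_nonneg hS.le (mul_nonneg (div_nonneg (hL i).le hLα.le) (hc i)))
    _ = _ := by ring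

theorem rrcd_sublinear_rate_convex_general (n N : ℕ) (b : Fin n → Fin N)
    (F φ : EuclideanSpace ℝ (Fin n) → ℝ)
    (hFconv : ConvexOn ℝ Set.univ F) (hFdiff : Differentiable ℝ F)
    (Xs : Set (EuclideanSpace ℝ (Fin n)))
    (Fs : ℝ) (hmin : ∀ y, Fs ≤ F y) (hXs : Xs = {y | F y = Fs})
    (hφdiff : Differentiable ℝ φ)
    (H : Fin N → ℝ) (hH : ∀ i, 0 < H i)
    (hφlip : ∀ (x h : EuclideanSpace ℝ (Fin n)) (i : Fin N), blockProj b i h = h →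
      ‖blockProj b i (gradient φ (x + h) - gradient φ x)‖ ≤ H i * ‖h‖)
    (L : Fin N → ℝ) (hL : ∀ i, 0 < L i)
    (hrel : ∀ (x d : EuclideanSpace ℝ (Fin n)) (i : Fin N), blockProj b i d = d →
      F (x + d) ≤ F x + ⟪gradient F x, d⟫
        + L i * (φ (x + d) - φ x - ⟪gradient φ x, d⟫))
    (α : ℝ) (Hmax : ℝ) (hHmax : IsGreatest (Set.range H) Hmax)
    (d : EuclideanSpace ℝ (Fin n) → Fin N → EuclideanSpace ℝ (Fin n))
    (hdblock : ∀ x i, blockProj b i (d x i) = d x i)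
    (hdmin : ∀ x i, ∀ e : EuclideanSpace ℝ (Fin n), blockProj b i e = e →
      ⟪gradient F x, d x i⟫ + L i * (φ (x + d x i) - φ x - ⟪gradient φ x, d x i⟫)
        ≤ ⟪gradient F x, e⟫ + L i * (φ (x + e) - φ x - ⟪gradient φ x, e⟫))
    (x₀ : EuclideanSpace ℝ (Fin n)) (hΔ₀ : 0 < F x₀ - Fs)
    (R : ℝ) (hR : 0 < R)
    (hRbound : ∀ (k : ℕ) (ω : Fin k → Fin N), ∃ xs ∈ Xs,
      Real.sqrt (∑ i : Fin N,
          L i ^ (1 - α) * ‖blockProj b i (traj (fun i x => x + d x i) x₀ k ω - xs)‖ ^ 2)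
        ≤ R) :
    ∀ k : ℕ, 1 ≤ k →
      (∑ ω : Fin k → Fin N,
          (∏ j : Fin k, (L (ω j) ^ α / ∑ l : Fin N, L l ^ α))
            * F (traj (fun i x => x + d x i) x₀ k ω)) - Fs
        ≤ 2 * (∑ l : Fin N, L l ^ α) * Hmax * R ^ 2
            / ((k : ℝ) + 2 * (∑ l : Fin N, L l ^ α) * Hmax * R ^ 2 / (F x₀ - Fs)) := by
  obtain ⟨imax, hHimax⟩ := hHmax.1
  set S := ∑ l, L l ^ α
  have hS : 0 < S := sum_pos (fun l _ => Real.rpow_pos_of_pos (hL l) α) ⟨imax, mem_univ _⟩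
  set p : Fin N → ℝ := fun i => L i ^ α / S
  have hp : ∀ i, 0 < p i := fun i => div_pos (Real.rpow_pos_of_pos (hL i) α) hS
  have hp1 : ∑ i, p i = 1 := by rw [← sum_div, div_self hS.ne']
  set C := 2 * S * Hmax * R ^ 2
  have hHmax_pos : 0 < Hmax := hHimax ▸ hH imax
  have hC : 0 < C := by positivity
  set x := traj (fun i x => x + d x i) x₀
  have hdescent : ∀ k ω, ∑ i, p i * (F (x k ω + d (x k ω) i) - Fs)
      ≤ (F (x k ω) - Fs) - (F (x k ω) - Fs) ^ 2 / C := by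
    intro k ω
    obtain ⟨xs, hxs, hdist⟩ := hRbound k ω
    rw [hXs] at hxs
    subst hxs
    have hM : ∑ i, H i * L i / p i * ‖blockProj b i (x k ω - xs)‖ ^ 2 ≤ S * Hmax * R ^ 2 :=
      (sum_mul_div_rpow_div_le hL (fun i => hHmax.2 ⟨i, rfl⟩) hS fun i => sq_nonneg _).trans
        (by gcongr; exact (Real.sqrt_le_iff.1 hdist).2)
    convert sum_mul_sub_le_sub_sq_div hp hp1 (fun i e he =>
        apply_add_le_of_le_bregman_subproblem hφdiff (hL i).le (fun x h => hφlip x h i)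
          (hrel _ _ i (hdblock _ i)) (hdmin _ i e he) he)
      hFconv (hFdiff _) (hmin _) (by positivity) hM using 3
    ring
  have hrate := sum_prod_mul_traj_le_div (step := fun i x => x + d x i) (V := fun y => F y - Fs)
    hC (fun i => (hp i).le) hp1 (fun y => sub_nonneg.2 (hmin y)) hΔ₀ hdescent
  intro k _
  change (∑ ω : Fin k → Fin N, (∏ j, p (ω j)) * F (x k ω)) - Fs ≤ _
  simpa only [mul_sub, sum_sub_distrib, ← sum_mul, sum_prod_eq_one hp1, one_mul] using hrate k

/-- sublinear convergence rate of the relative randomized coordinate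
descent method (RRCD) in the convex case.  `F` is convex differentiable with minimizer
set `X*` and minimal value `F*`; `φ` is differentiable, strictly convex along
coordinates, with `∇φ` block coordinate-wise Lipschitz (constants `Hᵢ > 0`,
`H_max = maxᵢ Hᵢ`); `F` is relative smooth along coordinates w.r.t. `φ` with constants
`Lᵢ > 0`; `d(x,i)` is a minimizer of the block-`i` subproblem at `x`; the iterates stay
within the `‖·‖_{1−α}`-distance `R` of `X*`; `Δ₀ = F(x₀) − F* > 0`.  Then for all `k ≥ 1`
the expected function value gap satisfies
`E[F(x_k)] − F* ≤ 2 S_α H_max R²/(k + 2 S_α H_max R²/Δ₀)`. -/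
theorem rrcd_sublinear_rate_convex (n N : ℕ) (b : Fin n → Fin N)
    (F φ : EuclideanSpace ℝ (Fin n) → ℝ)
    (hFconv : ConvexOn ℝ Set.univ F) (hFdiff : Differentiable ℝ F)
    (Xs : Set (EuclideanSpace ℝ (Fin n))) (hXsne : Xs.Nonempty)
    (Fs : ℝ) (hmin : ∀ y, Fs ≤ F y) (hXs : Xs = {y | F y = Fs})
    (hφdiff : Differentiable ℝ φ)
    (hφsc : ∀ (x : EuclideanSpace ℝ (Fin n)) (i : Fin N),
      StrictConvexOn ℝ {d : EuclideanSpace ℝ (Fin n) | blockProj b i d = d}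
        (fun d => φ (x + d)))
    (H : Fin N → ℝ) (hH : ∀ i, 0 < H i)
    (hφlip : ∀ (x h : EuclideanSpace ℝ (Fin n)) (i : Fin N), blockProj b i h = h →
      ‖blockProj b i (gradient φ (x + h) - gradient φ x)‖ ≤ H i * ‖h‖)
    (L : Fin N → ℝ) (hL : ∀ i, 0 < L i)
    (hrel : ∀ (x d : EuclideanSpace ℝ (Fin n)) (i : Fin N), blockProj b i d = d →
      F (x + d) ≤ F x + ⟪gradient F x, d⟫
        + L i * (φ (x + d) - φ x - ⟪gradient φ x, d⟫))
    (α : ℝ) (Hmax : ℝ) (hHmax : IsGreatest (Set.range H) Hmax)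
    (d : EuclideanSpace ℝ (Fin n) → Fin N → EuclideanSpace ℝ (Fin n))
    (hdblock : ∀ x i, blockProj b i (d x i) = d x i)
    (hdmin : ∀ x i, ∀ e : EuclideanSpace ℝ (Fin n), blockProj b i e = e →
      ⟪gradient F x, d x i⟫ + L i * (φ (x + d x i) - φ x - ⟪gradient φ x, d x i⟫)
        ≤ ⟪gradient F x, e⟫ + L i * (φ (x + e) - φ x - ⟪gradient φ x, e⟫))
    (x₀ : EuclideanSpace ℝ (Fin n)) (hΔ₀ : 0 < F x₀ - Fs)
    (R : ℝ) (hR : 0 < R)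
    (hRbound : ∀ (k : ℕ) (ω : Fin k → Fin N), ∃ xs ∈ Xs,
      Real.sqrt (∑ i : Fin N,
          L i ^ (1 - α) * ‖blockProj b i (traj (fun i x => x + d x i) x₀ k ω - xs)‖ ^ 2)
        ≤ R) :
    ∀ k : ℕ, 1 ≤ k →
      (∑ ω : Fin k → Fin N,
          (∏ j : Fin k, (L (ω j) ^ α / ∑ l : Fin N, L l ^ α))
            * F (traj (fun i x => x + d x i) x₀ k ω)) - Fs
        ≤ 2 * (∑ l : Fin N, L l ^ α) * Hmax * R ^ 2
            / ((k : ℝ) + 2 * (∑ l : Fin N, L l ^ α) * Hmax * R ^ 2 / (F x₀ - Fs)) :=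
  rrcd_sublinear_rate_convex_general n N b F φ hFconv hFdiff Xs Fs hmin hXs hφdiff H hH hφlip L hL
    hrel α Hmax hHmax d hdblock hdmin x₀ hΔ₀ R hR hRbound
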